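/- arXiv:2511.22803 — 5 statements merged into one kernel-verified Lean document; each statement's English description precedes it below -/
import Mathlib

section
/- Let H be a weighted hypergraph, G its associated multigraph, and f : E(G) → E(H) the map sending each clique edge to the hyperedge it came from. If G' is a subgraph of G that is an α-spanner of G (i.e., δ_{G'}(u,v) ≤ α·δ_G(u,v) for all vertex pairs u,v) with α > 1, then the sub-hypergraph H' of H with hyperedge set {f(e') : e' ∈ E(G')} satisfies δ_{H'}(u,v) ≤ α·δ_H(u,v) for all vertex pairs u, v. -/
open scoped ENNReal

variable {V : Type*}

/-- A walk in a hypergraph with hyperedge set `E`: a list of hyperedges where we can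
enter and leave each hyperedge at any two of its vertices. -/
def IsWalk (E : Set (Finset V)) : V → V → List (Finset V) → Prop
  | u, v, [] => u = v
  | u, v, h :: hs => h ∈ E ∧ u ∈ h ∧ ∃ x ∈ h, IsWalk E x v hs

/-- Hypergraph shortest-path distance: infimum of total hyperedge weight over walks. -/
noncomputable def hDist (E : Set (Finset V)) (w : Finset V → ℝ≥0∞) (u v : V) : ℝ≥0∞ :=
  sInf { d | ∃ l, IsWalk E u v l ∧ (l.map w).sum = d }

/-- A walk in a multigraph whose edges are drawn from a type `ε` with endpoint map `ends`. -/
def IsGWalk {ε : Type*} (ends : ε → V × V) (S : Set ε) : V → V → List ε → Prop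
  | u, v, [] => u = v
  | u, v, e :: es =>
      e ∈ S ∧ ∃ x, (ends e = (u, x) ∨ ends e = (x, u)) ∧ IsGWalk ends S x v es

/-- Multigraph shortest-path distance. -/
noncomputable def gDist {ε : Type*} (ends : ε → V × V) (S : Set ε) (w : ε → ℝ≥0∞)
    (u v : V) : ℝ≥0∞ :=
  sInf { d | ∃ l, IsGWalk ends S u v l ∧ (l.map w).sum = d }

/-- Edges of the associated multigraph of a hypergraph with hyperedge set `F`:
one edge `(h, a, b)` for each hyperedge `h ∈ F` and ordered pair of distinct
vertices `a b ∈ h`, with weight `z h`. -/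
def assocEdges (F : Set (Finset V)) : Set (Finset V × V × V) :=
  {e | e.1 ∈ F ∧ e.2.1 ∈ e.1 ∧ e.2.2 ∈ e.1 ∧ e.2.1 ≠ e.2.2}

/-- Endpoints of an edge of the associated multigraph. -/
def assocEnds : Finset V × V × V → V × V := fun e => e.2

/-- A `G'`-walk projects to a hyperwalk in `fst '' G'` with the same weight. -/
lemma gwalk_to_hwalk (F : Set (Finset V)) (G' : Set (Finset V × V × V))
    (hsub : G' ⊆ assocEdges F) :
    ∀ (l : List (Finset V × V × V)) (u v : V), IsGWalk assocEnds G' u v l →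
      IsWalk (Prod.fst '' G') u v (l.map Prod.fst) := by
  intro l
  induction l with
  | nil => intro u v h; exact h
  | cons e es ih =>
    rintro u v ⟨heS, x, hends, hrest⟩
    have hE := hsub heS
    obtain ⟨-, h1, h2, -⟩ := hE
    have hux : u ∈ e.1 ∧ x ∈ e.1 := by
      rcases hends with h | h <;>
        · simp only [assocEnds] at h
          rw [h] at h1 h2
          exact ⟨by tauto, by tauto⟩
    exact ⟨⟨e, heS, rfl⟩, hux.1, x, hux.2, ih x v hrest⟩

/-- A hyperwalk in `F` gives a walk in the associated multigraph of at most the same weight. -/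
lemma hwalk_to_gwalk (F : Set (Finset V)) (z : Finset V → ℝ≥0∞) :
    ∀ (l : List (Finset V)) (u v : V), IsWalk F u v l →
      ∃ l', IsGWalk assocEnds (assocEdges F) u v l' ∧
        (l'.map (fun e => z e.1)).sum ≤ (l.map z).sum := by
  intro l
  induction l with
  | nil => intro u v h; exact ⟨[], h, le_refl 0⟩
  | cons h hs ih =>
    rintro u v ⟨hF, hu, x, hx, hrest⟩
    obtain ⟨l', hw', hle⟩ := ih x v hrest
    by_cases hux : u = x
    · subst hux
      exact ⟨l', hw', le_trans hle (by simp [le_add_left])⟩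
    · refine ⟨(h, u, x) :: l', ⟨⟨hF, hu, hx, hux⟩, x, Or.inl rfl, hw'⟩, ?_⟩
      simpa using add_le_add_right hle (z h)

/-- a multiplicative α-spanner `G'` of the associated multigraph of a
hypergraph translates, via the map `e ↦ e.1` sending each clique edge to its original
hyperedge, into an α-hyperspanner of the hypergraph. -/
theorem assoc_spanner_to_hyperspanner
    (F : Set (Finset V)) (z : Finset V → ℝ≥0∞)
    (hcard : ∀ h ∈ F, 2 ≤ h.card) (hpos : ∀ h ∈ F, 0 < z h)
    (α : ℝ≥0∞) (hα : 1 < α)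
    (G' : Set (Finset V × V × V)) (hsub : G' ⊆ assocEdges F)
    (hspan : ∀ u v : V,
      gDist assocEnds G' (fun e => z e.1) u v
        ≤ α * gDist assocEnds (assocEdges F) (fun e => z e.1) u v)
    (u v : V) :
    hDist (Prod.fst '' G') z u v ≤ α * hDist F z u v := by
  have h1 : hDist (Prod.fst '' G') z u v ≤ gDist assocEnds G' (fun e => z e.1) u v := by
    refine le_sInf ?_
    rintro d ⟨l, hw, rfl⟩
    refine sInf_le ⟨l.map Prod.fst, gwalk_to_hwalk F G' hsub l u v hw, ?_⟩
    simp [List.map_map, Function.comp_def]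
  have h2 : gDist assocEnds (assocEdges F) (fun e => z e.1) u v ≤ hDist F z u v := by
    refine le_sInf ?_
    rintro d ⟨l, hw, rfl⟩
    obtain ⟨l', hw', hle⟩ := hwalk_to_gwalk F z l u v hw
    exact le_trans (sInf_le ⟨l', hw', rfl⟩) hle
  exact le_trans h1 (le_trans (hspan u v) (mul_le_mul_right h2 α))
end

section
/- Let H = (V,E) be a weighted hypergraph and suppose E'_1, ..., E'_{f+1} are pairwise disjoint subsets of E constructed iteratively so that for each i, the sub-hypergraph (V, E'_i) is a (2k-1)-hyperspanner of the hypergraph (V, E \ (E'_1 ∪ ... ∪ E'_{i-1})). Then the sub-hypergraph H' = (V, E'_1 ∪ ... ∪ E'_{f+1}) is an f-edge-fault-tolerant (2k-1)-hyperspanner of H: for every fault set F ⊆ E with |F| ≤ f and every pair of vertices u,v, δ_{H'\F}(u,v) ≤ (2k-1)·δ_{H\F}(u,v). -/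
open scoped ENNReal

variable {V : Type*}

theorem isWalk_mono' {E₁ E₂ : Set (Finset V)} (h : E₁ ⊆ E₂) :
    ∀ (u v : V) (l : List (Finset V)), IsWalk E₁ u v l → IsWalk E₂ u v l
  | _, _, [], hw => hw
  | u, v, e :: es, hw => by
    obtain ⟨he, hu, x, hx, hw'⟩ := hw
    exact ⟨h he, hu, x, hx, isWalk_mono' h x v es hw'⟩

theorem hDist_mono' {E₁ E₂ : Set (Finset V)} (w : Finset V → ℝ≥0∞) (h : E₁ ⊆ E₂) (u v : V) :
    hDist E₂ w u v ≤ hDist E₁ w u v :=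
  sInf_le_sInf fun d ⟨l, hl, hd⟩ => ⟨l, isWalk_mono' h _ _ _ hl, hd⟩

theorem isWalk_append' {E : Set (Finset V)} :
    ∀ {u x v : V} (l₁ l₂ : List (Finset V)), IsWalk E u x l₁ → IsWalk E x v l₂ →
      IsWalk E u v (l₁ ++ l₂)
  | _, _, _, [], l₂, h1, h2 => by cases h1; exact h2
  | u, x, v, e :: es, l₂, h1, h2 => by
    obtain ⟨he, hu, y, hy, hw⟩ := h1
    exact ⟨he, hu, y, hy, isWalk_append' es l₂ hw h2⟩

theorem hDist_triangle' (E : Set (Finset V)) (w : Finset V → ℝ≥0∞) (u x v : V) :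
    hDist E w u v ≤ hDist E w u x + hDist E w x v := by
  have key : hDist E w u x + hDist E w x v
      = ⨅ b ∈ {d | ∃ l, IsWalk E u x l ∧ (l.map w).sum = d},
          ⨅ c ∈ {d | ∃ l, IsWalk E x v l ∧ (l.map w).sum = d}, b + c := by
    rw [hDist, hDist, ENNReal.sInf_add]
    refine iInf_congr fun b => iInf_congr fun hb => ?_
    rw [sInf_eq_iInf]
    simp_rw [ENNReal.add_iInf]
  rw [key]
  refine le_iInf₂ fun b hb => le_iInf₂ fun c hc => ?_
  obtain ⟨l₁, hl₁, rfl⟩ := hb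
  obtain ⟨l₂, hl₂, rfl⟩ := hc
  exact sInf_le ⟨l₁ ++ l₂, isWalk_append' _ _ hl₁ hl₂,
    by rw [List.map_append, List.sum_append]⟩

theorem hDist_le_weight {E : Set (Finset V)} {w : Finset V → ℝ≥0∞} {h : Finset V}
    (hE : h ∈ E) {a b : V} (ha : a ∈ h) (hb : b ∈ h) : hDist E w a b ≤ w h :=
  sInf_le ⟨[h], ⟨hE, ha, b, hb, rfl⟩, by simp⟩

theorem hDist_self_le (E : Set (Finset V)) (w : Finset V → ℝ≥0∞) (u : V) :
    hDist E w u u ≤ 0 :=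
  sInf_le ⟨[], rfl, rfl⟩

theorem walk_bound (c : ℝ≥0∞) (S T : Set (Finset V)) (w : Finset V → ℝ≥0∞)
    (key : ∀ h ∈ T, ∀ a b : V, a ∈ h → b ∈ h → hDist S w a b ≤ c * w h) :
    ∀ (u v : V) (l : List (Finset V)), IsWalk T u v l →
      hDist S w u v ≤ c * (l.map w).sum
  | u, v, [], hw => by
    cases hw; simpa using hDist_self_le S w _
  | u, v, h :: hs, hw => by
    obtain ⟨hT, hu, x, hx, hw'⟩ := hw
    calc hDist S w u v ≤ hDist S w u x + hDist S w x v := hDist_triangle' S w u x v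
      _ ≤ c * w h + c * (hs.map w).sum :=
          add_le_add (key h hT u x hu hx) (walk_bound c S T w key x v hs hw')
      _ = c * ((h :: hs).map w).sum := by rw [List.map_cons, List.sum_cons, mul_add]

theorem mul_sInf_aux {c : ℝ≥0∞} (hc0 : c ≠ 0) (hct : c ≠ ∞) (s : Set ℝ≥0∞) :
    c * sInf s = ⨅ a ∈ s, c * a := by
  rw [sInf_eq_iInf, ENNReal.mul_iInf_of_ne hc0 hct]
  exact iInf_congr fun a => ENNReal.mul_iInf_of_ne hc0 hct

/-- the peel-off construction. If pairwise disjoint edge sets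
`E' 0, …, E' f` are chosen so that each `(V, E' i)` is a (2k-1)-hyperspanner of the
hypergraph with the previously peeled edges removed, then their union is an
f-edge-fault-tolerant (2k-1)-hyperspanner of `H`. -/
theorem peel_off_EFT_hyperspanner
    (E : Set (Finset V)) (w : Finset V → ℝ≥0∞) (hpos : ∀ h ∈ E, 0 < w h)
    (f k : ℕ) (hk : 1 ≤ k)
    (E' : Fin (f + 1) → Set (Finset V))
    (hsub : ∀ i, E' i ⊆ E)
    (hdisj : ∀ i j, i ≠ j → Disjoint (E' i) (E' j))
    (hspan : ∀ i : Fin (f + 1), ∀ u v : V,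
      hDist (E' i) w u v
        ≤ (2 * k - 1 : ℕ) * hDist (E \ ⋃ j : Fin (f + 1), ⋃ _ : j < i, E' j) w u v)
    (F : Set (Finset V)) (hF : F ⊆ E) (hFfin : F.Finite) (hFcard : F.ncard ≤ f)
    (u v : V) :
    hDist ((⋃ i, E' i) \ F) w u v ≤ (2 * k - 1 : ℕ) * hDist (E \ F) w u v := by
  set c : ℝ≥0∞ := ((2 * k - 1 : ℕ) : ℝ≥0∞) with hc
  have hk1 : 1 ≤ 2 * k - 1 := by omega
  have hc0 : c ≠ 0 := by
    simp only [hc, Ne, Nat.cast_eq_zero]; omega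
  have hct : c ≠ ∞ := ENNReal.natCast_ne_top _
  have hc1 : (1 : ℝ≥0∞) ≤ c := by
    rw [hc]; exact_mod_cast hk1
  -- pigeonhole: some E' i is disjoint from F
  have hpigeon : ∃ i, Disjoint (E' i) F := by
    by_contra hcon
    push_neg at hcon
    have hchoice : ∀ i : Fin (f + 1), ∃ h, h ∈ E' i ∧ h ∈ F := by
      intro i
      have := hcon i
      rw [Set.not_disjoint_iff] at this
      exact this
    choose g hg1 hg2 using hchoice
    have hinj : Function.Injective fun i => (⟨g i, hg2 i⟩ : F) := by
      intro i j hij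
      by_contra hne
      have := hdisj i j hne
      exact this.ne_of_mem (hg1 i) (hg1 j) (by simpa using congrArg Subtype.val hij)
    have hfin : Finite F := hFfin
    have := Nat.card_le_card_of_injective _ hinj
    rw [Nat.card_eq_fintype_card, Fintype.card_fin, Nat.card_coe_set_eq] at this
    omega
  obtain ⟨i, hi⟩ := hpigeon
  -- key per-edge bound
  have key : ∀ h ∈ E \ F, ∀ a b : V, a ∈ h → b ∈ h →
      hDist ((⋃ i, E' i) \ F) w a b ≤ c * w h := by
    rintro h ⟨hhE, hhF⟩ a b ha hb
    by_cases hmem : h ∈ ⋃ j, E' j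
    · calc hDist ((⋃ i, E' i) \ F) w a b ≤ w h := hDist_le_weight (show h ∈ (⋃ i, E' i) \ F from ⟨hmem, hhF⟩) ha hb
        _ = 1 * w h := (one_mul _).symm
        _ ≤ c * w h := mul_le_mul_left hc1 _
    · have hsubi : E' i ⊆ (⋃ j, E' j) \ F := by
        intro e he
        exact ⟨Set.mem_iUnion.2 ⟨i, he⟩, fun heF => hi.ne_of_mem he heF rfl⟩
      have h1 : hDist ((⋃ i, E' i) \ F) w a b ≤ hDist (E' i) w a b :=
        hDist_mono' w hsubi a b
      have h2 : h ∈ E \ ⋃ j : Fin (f + 1), ⋃ _ : j < i, E' j := by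
        refine ⟨hhE, fun hcon => hmem ?_⟩
        simp only [Set.mem_iUnion] at hcon ⊢
        obtain ⟨j, _, hj⟩ := hcon
        exact ⟨j, hj⟩
      calc hDist ((⋃ i, E' i) \ F) w a b ≤ hDist (E' i) w a b := h1
        _ ≤ c * hDist (E \ ⋃ j : Fin (f + 1), ⋃ _ : j < i, E' j) w a b := hspan i a b
        _ ≤ c * w h := mul_le_mul_right (hDist_le_weight h2 ha hb) _
  -- conclude
  have hb := walk_bound c ((⋃ i, E' i) \ F) (E \ F) w key u v
  have heq : c * hDist (E \ F) w u v
      = ⨅ d ∈ {d | ∃ l, IsWalk (E \ F) u v l ∧ (l.map w).sum = d}, c * d :=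
    mul_sInf_aux hc0 hct _
  rw [heq]
  refine le_iInf₂ fun d hd => ?_
  obtain ⟨l, hl, rfl⟩ := hd
  exact hb l hl
end

section
/- Let u, v be two vertices and suppose there exist 2f+1 walks W_1, ..., W_{2f+1} from u to v in a hypergraph S, such that each hyperedge of S appears in at most two of the walks, and each walk has length at most L. Then for any set F of at most f hyperedges, there exists a walk from u to v in S \ F of length at most L. -/
open scoped ENNReal

variable {V : Type*}

/-- if there are 2f+1 walks from u to v, each of length at most L, such
that every hyperedge appears in at most two of the walks, then after deleting any f
hyperedges some walk of length at most L from u to v survives. -/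
theorem survive_walk_after_faults [DecidableEq V]
    (S : Set (Finset V)) (w : Finset V → ℝ≥0∞) (u v : V)
    (f : ℕ) (L : ℝ≥0∞)
    (W : Fin (2 * f + 1) → List (Finset V))
    (hwalk : ∀ j, IsWalk S u v (W j))
    (hlen : ∀ j, ((W j).map w).sum ≤ L)
    (htwo : ∀ h : Finset V, (Finset.univ.filter (fun j => h ∈ W j)).card ≤ 2)
    (F : Set (Finset V)) (hFfin : F.Finite) (hFcard : F.ncard ≤ f) :
    ∃ l, IsWalk (S \ F) u v l ∧ (l.map w).sum ≤ L := by
  classical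
  have key : ∃ j : Fin (2 * f + 1), ∀ h ∈ W j, h ∉ F := by
    by_contra hc
    push_neg at hc
    -- every j is "bad": uses some edge of F
    have hsub : (Finset.univ : Finset (Fin (2 * f + 1))) ⊆
        hFfin.toFinset.biUnion (fun h => Finset.univ.filter (fun j => h ∈ W j)) := by
      intro j _
      obtain ⟨h, hhW, hhF⟩ := hc j
      simp only [Finset.mem_biUnion, Set.Finite.mem_toFinset, Finset.mem_filter,
        Finset.mem_univ, true_and]
      exact ⟨h, hhF, hhW⟩
    have hcard := Finset.card_le_card hsub
    have hb : (hFfin.toFinset.biUnion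
        (fun h => Finset.univ.filter (fun j => h ∈ W j))).card ≤ 2 * f := by
      calc _ ≤ ∑ h ∈ hFfin.toFinset, (Finset.univ.filter (fun j => h ∈ W j)).card :=
              Finset.card_biUnion_le
        _ ≤ ∑ _h ∈ hFfin.toFinset, 2 := Finset.sum_le_sum fun h _ => htwo h
        _ = 2 * hFfin.toFinset.card := by rw [Finset.sum_const]; ring
        _ ≤ 2 * f := by
            have : hFfin.toFinset.card = F.ncard :=
              (Set.ncard_eq_toFinset_card F hFfin).symm
            omega
    simp only [Finset.card_univ, Fintype.card_fin] at hcard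
    omega
  obtain ⟨j, hj⟩ := key
  refine ⟨W j, ?_, hlen j⟩
  have : ∀ (l : List (Finset V)) (a : V), IsWalk S a v l → (∀ h ∈ l, h ∉ F) →
      IsWalk (S \ F) a v l := by
    intro l
    induction l with
    | nil => intro a h _; exact h
    | cons h t ih =>
      intro a ⟨hS, ha, x, hx, hw⟩ havoid
      exact ⟨⟨hS, havoid h List.mem_cons_self⟩, ha, x, hx,
        ih x hw fun e he => havoid e (List.mem_cons_of_mem _ he)⟩
  exact this (W j) u (hwalk j) hj
end

section
/- Let A be a finite family of pairwise edge-disjoint paths whose head (first) hyperedges are pairwise vertex-disjoint, and let B be a finite family of pairwise edge-disjoint paths, where each path contains at most k hyperedges and each hyperedge contains at most r vertices. Suppose every path in A shares a hyperedge with some path in B or has its head hyperedge sharing a vertex with the head hyperedge of some path in B. If |A| ≥ 4(k+r)f and |B| ≥ 2f+1, then one can select 2f+1 pairs (Q_1,P_1), ..., (Q_{2f+1}, P_{2f+1}) with all Q_j ∈ A distinct, all P_j ∈ B distinct, and for each j, Q_j shares a hyperedge with P_j or the head hyperedges of Q_j and P_j share a vertex. -/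
variable {V : Type*}

/-- greedy selection of 2f+1 intersecting pairs of paths. Paths are lists of
hyperedges; the head of a path is its first hyperedge. -/
theorem greedy_pair_selection [DecidableEq V]
    (k r f : ℕ) (hf : 1 ≤ f) (hk : 1 ≤ k) (hr : 2 ≤ r)
    (A B : Finset (List (Finset V)))
    (hAne : ∀ P ∈ A, P ≠ []) (hBne : ∀ P ∈ B, P ≠ [])
    -- paths in A are pairwise edge-disjoint
    (hAdisj : ∀ P ∈ A, ∀ Q ∈ A, P ≠ Q → ∀ h : Finset V, ¬(h ∈ P ∧ h ∈ Q))
    -- head hyperedges of paths in A are pairwise vertex-disjoint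
    (hAheads : ∀ P ∈ A, ∀ Q ∈ A, P ≠ Q → Disjoint P.headI Q.headI)
    -- paths in B are pairwise edge-disjoint
    (hBdisj : ∀ P ∈ B, ∀ Q ∈ B, P ≠ Q → ∀ h : Finset V, ¬(h ∈ P ∧ h ∈ Q))
    -- each path has at most k hyperedges and each hyperedge at most r vertices
    (hklen : ∀ P ∈ A ∪ B, P.length ≤ k)
    (hrcard : ∀ P ∈ A ∪ B, ∀ h ∈ P, h.card ≤ r)
    -- every path of A meets some path of B (shared hyperedge or intersecting heads)
    (hmeet : ∀ Q ∈ A, ∃ P ∈ B,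
      (∃ h : Finset V, h ∈ Q ∧ h ∈ P) ∨ ¬Disjoint Q.headI P.headI)
    (hA : 4 * (k + r) * f ≤ A.card) (hB : 2 * f + 1 ≤ B.card) :
    ∃ (Q P : Fin (2 * f + 1) → List (Finset V)),
      Function.Injective Q ∧ Function.Injective P ∧
      ∀ j, Q j ∈ A ∧ P j ∈ B ∧
        ((∃ h : Finset V, h ∈ Q j ∧ h ∈ P j) ∨ ¬Disjoint (Q j).headI (P j).headI) := by
  classical
  set rel : List (Finset V) → List (Finset V) → Prop :=
    fun Q P => (∃ h : Finset V, h ∈ Q ∧ h ∈ P) ∨ ¬Disjoint Q.headI P.headI with hrel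
  have hmeet' : ∀ Q : List (Finset V), ∃ P, Q ∈ A → (P ∈ B ∧ rel Q P) := by
    intro Q
    by_cases hQ : Q ∈ A
    · obtain ⟨P, hP, h⟩ := hmeet Q hQ
      exact ⟨P, fun _ => ⟨hP, h⟩⟩
    · exact ⟨[], fun h => absurd h hQ⟩
  choose g hg using hmeet'
  -- fiber bound
  have fiber : ∀ P ∈ B, (A.filter fun Q => rel Q P).card ≤ k + r := by
    intro P hPB
    have hPne := hBne P hPB
    have hPk := hklen P (Finset.mem_union_right _ hPB)
    have hPhead : P.headI ∈ P := by
      cases P with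
      | nil => exact absurd rfl hPne
      | cons a l => simp [List.headI]
    have hPr : P.headI.card ≤ r := hrcard P (Finset.mem_union_right _ hPB) _ hPhead
    have hsub : (A.filter fun Q => rel Q P) ⊆
        (A.filter fun Q => ∃ h : Finset V, h ∈ Q ∧ h ∈ P) ∪
        (A.filter fun Q => ¬Disjoint Q.headI P.headI) := by
      intro Q hQ
      simp only [Finset.mem_filter, Finset.mem_union, hrel] at hQ ⊢
      rcases hQ with ⟨hQA, h | h⟩
      · exact Or.inl ⟨hQA, h⟩
      · exact Or.inr ⟨hQA, h⟩
    have h1 : (A.filter fun Q => ∃ h : Finset V, h ∈ Q ∧ h ∈ P).card ≤ k := by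
      set φ : List (Finset V) → Finset V :=
        fun Q => if h : ∃ h' : Finset V, h' ∈ Q ∧ h' ∈ P then h.choose else ∅ with hφ
      have hmaps : ∀ Q ∈ (A.filter fun Q => ∃ h : Finset V, h ∈ Q ∧ h ∈ P), φ Q ∈ P.toFinset := by
        intro Q hQ
        simp only [Finset.mem_filter] at hQ
        simp only [hφ]
        rw [dif_pos hQ.2]
        exact List.mem_toFinset.mpr hQ.2.choose_spec.2
      have hinj : Set.InjOn φ (A.filter fun Q => ∃ h : Finset V, h ∈ Q ∧ h ∈ P) := by
        intro Q hQ Q' hQ' heq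
        simp only [Finset.mem_coe, Finset.mem_filter] at hQ hQ'
        by_contra hne
        simp only [hφ] at heq
        rw [dif_pos hQ.2, dif_pos hQ'.2] at heq
        have s1 := hQ.2.choose_spec
        have s2 := hQ'.2.choose_spec
        exact hAdisj Q hQ.1 Q' hQ'.1 hne hQ.2.choose ⟨s1.1, heq ▸ s2.1⟩
      exact ((Finset.card_le_card_of_injOn φ hmaps hinj).trans
        ((List.toFinset_card_le P).trans hPk))
    have h2 : (A.filter fun Q => ¬Disjoint Q.headI P.headI).card ≤ r := by
      by_cases hS : (A.filter fun Q => ¬Disjoint Q.headI P.headI).Nonempty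
      · obtain ⟨Q0, hQ0⟩ := hS
        simp only [Finset.mem_filter] at hQ0
        obtain ⟨v0, -, -⟩ := Finset.not_disjoint_iff.mp hQ0.2
        set ψ : List (Finset V) → V := fun Q => if h : ¬Disjoint Q.headI P.headI then
            (Finset.not_disjoint_iff.mp h).choose else v0 with hψ
        have hmaps : ∀ Q ∈ (A.filter fun Q => ¬Disjoint Q.headI P.headI), ψ Q ∈ P.headI := by
          intro Q hQ
          simp only [Finset.mem_filter] at hQ
          simp only [hψ]
          rw [dif_pos hQ.2]
          exact (Finset.not_disjoint_iff.mp hQ.2).choose_spec.2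
        have hinj : Set.InjOn ψ (A.filter fun Q => ¬Disjoint Q.headI P.headI) := by
          intro Q hQ Q' hQ' heq
          simp only [Finset.mem_coe, Finset.mem_filter] at hQ hQ'
          by_contra hne
          simp only [hψ] at heq
          rw [dif_pos hQ.2, dif_pos hQ'.2] at heq
          have hd := hAheads Q hQ.1 Q' hQ'.1 hne
          exact Finset.not_disjoint_iff.mpr
            ⟨_, (Finset.not_disjoint_iff.mp hQ.2).choose_spec.1,
              heq ▸ (Finset.not_disjoint_iff.mp hQ'.2).choose_spec.1⟩ hd
        exact (Finset.card_le_card_of_injOn ψ hmaps hinj).trans hPr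
      · rw [Finset.not_nonempty_iff_eq_empty] at hS
        simp [hS]
    calc (A.filter fun Q => rel Q P).card
        ≤ _ := Finset.card_le_card hsub
      _ ≤ _ := Finset.card_union_le _ _
      _ ≤ k + r := Nat.add_le_add h1 h2
  -- counting
  have hcount : A.card ≤ (A.image g).card * (k + r) := by
    rw [Finset.card_eq_sum_card_image g A]
    calc ∑ P ∈ A.image g, (A.filter fun Q => g Q = P).card
        ≤ ∑ _P ∈ A.image g, (k + r) := by
          apply Finset.sum_le_sum
          intro P hP
          obtain ⟨Q0, hQ0, hQ0P⟩ := Finset.mem_image.mp hP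
          have hPB : P ∈ B := hQ0P ▸ (hg Q0 hQ0).1
          refine (Finset.card_le_card ?_).trans (fiber P hPB)
          intro Q hQ
          simp only [Finset.mem_filter] at hQ ⊢
          exact ⟨hQ.1, hQ.2 ▸ (hg Q hQ.1).2⟩
      _ = (A.image g).card * (k + r) := by rw [Finset.sum_const, smul_eq_mul]
  have h4f : 4 * f ≤ (A.image g).card := by
    have h1 : 4 * f * (k + r) ≤ (A.image g).card * (k + r) := by
      calc 4 * f * (k + r) = 4 * (k + r) * f := by ring
        _ ≤ A.card := hA
        _ ≤ _ := hcount
    exact Nat.le_of_mul_le_mul_right h1 (by omega)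
  have hcard : 2 * f + 1 ≤ (A.image g).card := by omega
  obtain ⟨T, hTsub, hTcard⟩ := Finset.exists_subset_card_eq hcard
  have hlen : T.toList.length = 2 * f + 1 := by rw [Finset.length_toList, hTcard]
  set Pf : Fin (2 * f + 1) → List (Finset V) := fun j => T.toList.get (Fin.cast hlen.symm j)
    with hPf
  have hPinj : Function.Injective Pf := by
    intro i j hij
    have := (List.nodup_iff_injective_get.mp T.nodup_toList) hij
    exact Fin.cast_injective _ this
  have hPT : ∀ j, Pf j ∈ T := fun j => Finset.mem_toList.mp (T.toList.get_mem _)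
  have hex : ∀ j, ∃ Q, Q ∈ A ∧ g Q = Pf j := by
    intro j
    obtain ⟨Q, hQ, hQP⟩ := Finset.mem_image.mp (hTsub (hPT j))
    exact ⟨Q, hQ, hQP⟩
  choose Qf hQfA hQfP using hex
  refine ⟨Qf, Pf, ?_, hPinj, ?_⟩
  · intro i j hij
    apply hPinj
    rw [← hQfP i, ← hQfP j, hij]
  · intro j
    refine ⟨hQfA j, ?_, ?_⟩
    · rw [← hQfP j]; exact (hg _ (hQfA j)).1
    · have := (hg _ (hQfA j)).2
      rwa [hQfP j] at this
end

section
/- Let x_1, x_2, y_1, y_2 lie in this order on a shortest path P in H\F, and suppose the shortest paths B_x from x_1 to x_2 and B_y from y_1 to y_2 in S both first encounter a faulty hyperedge e at the same vertex v (same class (v,e)). Write B_1 = B_x[x_1,v], B_2 = B_x[v', x_2] for v' the exit vertex of e on B_x, B_3 = B_y[y_1,v]. If S contains an additive α-hyperspanner of H so that |B_1| + w(e) + |B_2| ≤ |P[x_1,x_2]| + α and |B_3| ≤ w(e) + |B_2| + |P[x_2,y_1]| + α, and B_1, B_3 contain no faulty hyperedges, then δ_{S\F}(x_1,y_1) ≤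 |P[x_1,y_1]| + 2α. -/
open scoped ENNReal

variable {V : Type*}

lemma IsWalk.append {E : Set (Finset V)} {u v z : V} :
    ∀ {l l' : List (Finset V)}, IsWalk E u v l → IsWalk E v z l' →
      IsWalk E u z (l ++ l') := by
  intro l
  induction l generalizing u with
  | nil => intro l' h h'; cases h; simpa using h'
  | cons a as ih =>
      intro l' h h'
      obtain ⟨hE, hu, x, hx, hw⟩ := h
      exact ⟨hE, hu, x, hx, ih hw h'⟩

lemma IsWalk.reverse {E : Set (Finset V)} {u v : V} :
    ∀ {l : List (Finset V)}, IsWalk E u v l → IsWalk E v u l.reverse := by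
  intro l
  induction l generalizing u with
  | nil => intro h; cases h; exact rfl
  | cons a as ih =>
      intro h
      obtain ⟨hE, hu, x, hx, hw⟩ := h
      have := (ih hw).append (l' := [a]) ⟨hE, hx, u, hu, rfl⟩
      simpa using this

/-- the bypass argument for two pairs of the same class (v,e).  The
fault-free prefixes B₁ (from x₁ to v) and B₃ (from y₁ to v) live in S∖F; together with
the additive-spanner inequalities |B₁| + w(e) + |B₂| ≤ |P[x₁,x₂]| + α and
|B₃| ≤ w(e) + |B₂| + |P[x₂,y₁]| + α one gets
δ_{S∖F}(x₁,y₁) ≤ |P[x₁,x₂]| + |P[x₂,y₁]| + 2α = |P[x₁,y₁]| + 2α. -/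
theorem same_class_bypass_bound
    (E S : Set (Finset V)) (hSE : S ⊆ E) (w : Finset V → ℝ≥0∞)
    (F : Set (Finset V)) (hF : F ⊆ E)
    (α we b1 b2 b3 p1 p2 : ℝ≥0∞)
    (x1 y1 vv : V)
    (B1 B3 : List (Finset V))
    -- B₁, B₃ are fault-free walks from x₁ resp. y₁ to the vertex v entering e
    (hB1 : IsWalk (S \ F) x1 vv B1) (hB1w : (B1.map w).sum = b1)
    (hB3 : IsWalk (S \ F) y1 vv B3) (hB3w : (B3.map w).sum = b3)
    -- the two additive-spanner inequalities
    (hx : b1 + we + b2 ≤ p1 + α)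
    (hy : b3 ≤ we + b2 + p2 + α) :
    hDist (S \ F) w x1 y1 ≤ p1 + p2 + 2 * α := by
  have hwalk : IsWalk (S \ F) x1 y1 (B3 ++ B1.reverse).reverse :=
    (hB3.append hB1.reverse).reverse
  have hmem : ((B3 ++ B1.reverse).reverse.map w).sum ∈
      { d | ∃ l, IsWalk (S \ F) x1 y1 l ∧ (l.map w).sum = d } := ⟨_, hwalk, rfl⟩
  have hle := sInf_le hmem
  unfold hDist
  refine hle.trans ?_
  have hsum : ((B3 ++ B1.reverse).reverse.map w).sum = b1 + b3 := by
    simp [List.map_reverse, List.sum_reverse, hB1w, hB3w, add_comm]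
  rw [hsum]
  calc b1 + b3 ≤ b1 + (we + b2 + p2 + α) := by gcongr
    _ = (b1 + we + b2) + (p2 + α) := by ring
    _ ≤ (p1 + α) + (p2 + α) := by gcongr
    _ = p1 + p2 + 2 * α := by ring
end
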